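/- arXiv:2106.02700 — 3 statements merged into one kernel-verified Lean document; each statement's English description precedes it below -/
import Mathlib

section
/- Let (a_k), (b_k⁻), (b_k⁺) be real sequences with a_k ≠ 0 for all k, and define the discrete Lagrangian L_d^k(z₀,z₁) = a_k·½‖z₁−z₀‖² − b_k⁻ f(z₀) − b_{k+1}⁺ f(z₁) for a differentiable f : ℝⁿ → ℝ. Then a sequence (x_k) satisfies the discrete Euler–Lagrange equations D₁L_d^{k+1}(x_{k+1},x_{k+2}) + D₂L_d^k(x_k,x_{k+1}) = 0 if and only if x_{k+2} − x_{k+1} = μ_{k+1}(x_{k+1}−x_k) − η_{k+1}∇f(x_{k+1}), where μ_{k+1} = a_k/a_{k+1} and η_{k+1} = (b_{k+1}⁻ + b_{k+1}⁺)/a_{k+1}. -/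
open Asymptotics RealInnerProductSpace

section Aux

variable {F : Type*} [NormedAddCommGroup F] [InnerProductSpace ℝ F] [CompleteSpace F]
variable {f g : F → ℝ} {f' g' x : F}

lemma hga_const_mul (c : ℝ) (h : HasGradientAt f f' x) :
    HasGradientAt (fun z => c * f z) (c • f') x := by
  rw [hasGradientAt_iff_hasFDerivAt] at h ⊢
  rw [map_smul]
  exact h.const_mul c

lemma hga_sub (hfg : HasGradientAt f f' x) (hg : HasGradientAt g g' x) :
    HasGradientAt (fun z => f z - g z) (f' - g') x := by
  rw [hasGradientAt_iff_hasFDerivAt] at hfg hg ⊢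
  rw [map_sub]
  exact hfg.sub hg

lemma hga_half_sq (c x : F) :
    HasGradientAt (fun z => (1/2 : ℝ) * ‖z - c‖ ^ 2) (x - c) x := by
  rw [hasGradientAt_iff_isLittleO]
  have key : (fun y : F => (1/2 : ℝ) * ‖y - c‖ ^ 2 - (1/2 : ℝ) * ‖x - c‖ ^ 2
      - ⟪x - c, y - x⟫) = fun y : F => (1/2 : ℝ) * ‖y - x‖ ^ 2 := by
    funext y
    have hyc : y - c = (y - x) + (x - c) := by abel
    rw [hyc, norm_add_sq_real, real_inner_comm]
    ring
  rw [key]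
  have h1 : (fun y : F => ‖y - x‖) =o[nhds x] (fun _ => (1 : ℝ)) := by
    rw [isLittleO_one_iff]
    have : Filter.Tendsto (fun y : F => ‖y - x‖) (nhds x) (nhds ‖x - x‖) :=
      ((continuous_id.sub continuous_const).norm).tendsto x
    simpa using this
  have h2 := h1.mul_isBigO (isBigO_refl (fun y : F => ‖y - x‖) (nhds x))
  have h3 : (fun y : F => ‖y - x‖ * ‖y - x‖) =o[nhds x] fun y : F => y - x := by
    have := h2.congr' (Filter.Eventually.of_forall fun y => rfl)
      (Filter.Eventually.of_forall fun y : F => one_mul ‖y - x‖)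
    rwa [isLittleO_norm_right] at this
  have h4 := h3.const_mul_left (1/2 : ℝ)
  exact h4.congr_left fun y => by ring

lemma central [NoZeroSMulDivisors ℝ F] (α β β₁ β₂ : ℝ) (hα : α ≠ 0) (x0 x1 x2 g : F) :
    (α • (x1 - x2) - β₁ • g) + (β • (x1 - x0) - β₂ • g) = 0 ↔
      x2 - x1 = (β / α) • (x1 - x0) - ((β₁ + β₂) / α) • g := by
  have h0 : (α • (x1 - x2) - β₁ • g) + (β • (x1 - x0) - β₂ • g)
      = (β • (x1 - x0) - (β₁ + β₂) • g) - α • (x2 - x1) := by module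
  have hr : α • ((β / α) • (x1 - x0) - ((β₁ + β₂) / α) • g)
      = β • (x1 - x0) - (β₁ + β₂) • g := by
    match_scalars <;> field_simp <;> ring
  rw [h0, sub_eq_zero, eq_comm, ← hr, (smul_right_injective F hα).eq_iff]

end Aux

theorem discrete_EL_iff_classical_momentum (n : ℕ)
    (f : EuclideanSpace ℝ (Fin n) → ℝ) (hf : Differentiable ℝ f)
    (a bm bp : ℕ → ℝ) (ha : ∀ k, a k ≠ 0)
    (Ld : ℕ → EuclideanSpace ℝ (Fin n) → EuclideanSpace ℝ (Fin n) → ℝ)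
    (hLd : ∀ k z₀ z₁, Ld k z₀ z₁ =
      a k * ((1/2 : ℝ) * ‖z₁ - z₀‖^2) - bm k * f z₀ - bp (k+1) * f z₁)
    (x : ℕ → EuclideanSpace ℝ (Fin n)) :
    (∀ k, gradient (fun z => Ld (k+1) z (x (k+2))) (x (k+1))
        + gradient (fun z => Ld k (x k) z) (x (k+1)) = 0) ↔
    (∀ k, x (k+2) - x (k+1) =
      (a k / a (k+1)) • (x (k+1) - x k)
        - ((bm (k+1) + bp (k+1)) / a (k+1)) • gradient f (x (k+1))) := by
  have hgrad : ∀ k, gradient (fun z => Ld (k+1) z (x (k+2))) (x (k+1))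
      = a (k+1) • (x (k+1) - x (k+2)) - bm (k+1) • gradient f (x (k+1)) := by
    intro k
    have heq : (fun z => Ld (k+1) z (x (k+2)))
        = fun z => (a (k+1) * ((1/2 : ℝ) * ‖z - x (k+2)‖ ^ 2) - bm (k+1) * f z)
          - bp (k+2) * f (x (k+2)) := by
      funext z; rw [hLd, norm_sub_rev]
    rw [heq]
    have h := hga_sub
      (hga_sub (hga_const_mul (a (k+1)) (hga_half_sq (x (k+2)) (x (k+1))))
        (hga_const_mul (bm (k+1)) ((hf (x (k+1))).hasGradientAt)))
      (hasGradientAt_const (x (k+1)) (bp (k+2) * f (x (k+2))))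
    rw [h.gradient, sub_zero]
  have hgrad2 : ∀ k, gradient (fun z => Ld k (x k) z) (x (k+1))
      = a k • (x (k+1) - x k) - bp (k+1) • gradient f (x (k+1)) := by
    intro k
    have heq : (fun z => Ld k (x k) z)
        = fun z => (a k * ((1/2 : ℝ) * ‖z - x k‖ ^ 2) - bm k * f (x k))
          - bp (k+1) * f z := by
      funext z; rw [hLd]
    rw [heq]
    have h := hga_sub
      (hga_sub (hga_const_mul (a k) (hga_half_sq (x k) (x (k+1))))
        (hasGradientAt_const (x (k+1)) (bm k * f (x k))))
      (hga_const_mul (bp (k+1)) ((hf (x (k+1))).hasGradientAt))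
    rw [h.gradient, sub_zero]
  constructor
  · intro h k
    have hk := h k
    rw [hgrad, hgrad2] at hk
    exact (central (a (k+1)) (a k) (bm (k+1)) (bp (k+1)) (ha (k+1))
      (x k) (x (k+1)) (x (k+2)) (gradient f (x (k+1)))).mp hk
  · intro h k
    rw [hgrad, hgrad2]
    exact (central (a (k+1)) (a k) (bm (k+1)) (bp (k+1)) (ha (k+1))
      (x k) (x (k+1)) (x (k+2)) (gradient f (x (k+1)))).mpr (h k)
end

section
/- With L_d^k as above and discrete forces (F_d^k)⁻(z₀,z₁) = −(a_{k−1}/a_k)(b_k⁻+b_k⁺)∇f(z₀) and (F_d^k)⁺(z₀,z₁) = (b_k⁻+b_k⁺)∇f(z₀), a sequence (x̄_k) satisfies the forced discrete Euler–Lagrange equations D₁L_d^{k+1}(x̄_{k+1},x̄_{k+2}) + D₂L_d^k(x̄_k,x̄_{k+1}) + (F_d^{k+1})⁻(x̄_{k+1},x̄_{k+2}) + (F_d^k)⁺(x̄_k,x̄_{k+1}) = 0 if and only if x̄_{k+2} − x̄_{k+1} = μ_{k+1}(x̄_{k+1}−x̄_k) − η_{k+1}∇f(x̄_{k+1}) −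 μ_{k+1}(η_{k+1}∇f(x̄_{k+1}) − η_k∇f(x̄_k)), where μ_{k+1} = a_k/a_{k+1}, η_k = (b_k⁻+b_k⁺)/a_k. -/
open InnerProductSpace

noncomputable section

/-- `discreteLagrangian A B C f z₀ z₁ = A · ½‖z₁ − z₀‖² − B f(z₀) − C f(z₁)`; with
`A = a_k`, `B = b_k⁻`, `C = b_{k+1}⁺` this is the paper's `L_d^k`. -/
def discreteLagrangian {F : Type*} [NormedAddCommGroup F] (A B C : ℝ) (f : F → ℝ)
    (z₀ z₁ : F) : ℝ :=
  A * ((1/2 : ℝ) * ‖z₁ - z₀‖^2) - B * f z₀ - C * f z₁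

section Gradient

variable {F : Type*} [NormedAddCommGroup F] [InnerProductSpace ℝ F] [CompleteSpace F]

theorem hasGradientAt_mul_half_norm_sq_sub_mul_sub_const (A B C : ℝ) (c : F) {g : F → ℝ}
    {p : F} (hg : DifferentiableAt ℝ g p) :
    HasGradientAt (fun z => A * ((1/2 : ℝ) * ‖z - c‖^2) - B * g z - C)
      (A • (p - c) - B • gradient g p) p := by
  rw [hasGradientAt_iff_hasFDerivAt]
  have hsq : HasFDerivAt (fun z : F => ‖z - c‖^2) (2 • innerSL ℝ (p - c)) p := by
    simpa using ((hasFDerivAt_id p).sub_const c).norm_sq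
  refine ((((hsq.const_smul (1/2 : ℝ)).const_smul A).sub
    (hg.hasFDerivAt.const_smul B)).sub_const C).congr_fderiv ?_
  ext y
  simp [toDual_apply_apply, gradient]

variable {f : F → ℝ} {p : F}

theorem gradient_discreteLagrangian_fst (A B C : ℝ) (z₁ : F) (hf : DifferentiableAt ℝ f p) :
    gradient (fun z => discreteLagrangian A B C f z z₁) p = A • (p - z₁) - B • gradient f p := by
  have hL : (fun z => discreteLagrangian A B C f z z₁)
      = fun z => A * ((1/2 : ℝ) * ‖z - z₁‖^2) - B * f z - C * f z₁ := by
    funext z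
    rw [discreteLagrangian, norm_sub_rev]
  rw [hL]
  exact (hasGradientAt_mul_half_norm_sq_sub_mul_sub_const _ _ _ _ hf).gradient

theorem gradient_discreteLagrangian_snd (A B C : ℝ) (z₀ : F) (hf : DifferentiableAt ℝ f p) :
    gradient (fun z => discreteLagrangian A B C f z₀ z) p = A • (p - z₀) - C • gradient f p := by
  have hL : (fun z => discreteLagrangian A B C f z₀ z)
      = fun z => A * ((1/2 : ℝ) * ‖z - z₀‖^2) - C * f z - B * f z₀ := by
    funext z
    rw [discreteLagrangian]
    ring
  rw [hL]
  exact (hasGradientAt_mul_half_norm_sq_sub_mul_sub_const _ _ _ _ hf).gradient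

end Gradient

/-- Solving the forced discrete Euler–Lagrange equation at step `k` for `x_{k+2}`, with
`a₀ = a_k`, `a₁ = a_{k+1}`, `s₀ = b_k⁻ + b_k⁺` and `gᵢ = ∇f(x_{k+i})`. -/
theorem forced_EL_eq_zero_iff {𝕜 E : Type*} [Field 𝕜] [AddCommGroup E] [Module 𝕜 E]
    {a₀ a₁ : 𝕜} (h₀ : a₀ ≠ 0) (h₁ : a₁ ≠ 0) (bm₁ bp₁ s₀ : 𝕜) (x₀ x₁ x₂ g₀ g₁ : E) :
    a₁ • (x₁ - x₂) - bm₁ • g₁ + (a₀ • (x₁ - x₀) - bp₁ • g₁)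
        + (-(a₀ / a₁ * (bm₁ + bp₁))) • g₁ + s₀ • g₀ = 0 ↔
      x₂ - x₁ = (a₀ / a₁) • (x₁ - x₀) - ((bm₁ + bp₁) / a₁) • g₁
        - (a₀ / a₁) • (((bm₁ + bp₁) / a₁) • g₁ - (s₀ / a₀) • g₀) := by
  have residual : a₁ • (x₁ - x₂) - bm₁ • g₁ + (a₀ • (x₁ - x₀) - bp₁ • g₁)
        + (-(a₀ / a₁ * (bm₁ + bp₁))) • g₁ + s₀ • g₀
      = a₁ • ((a₀ / a₁) • (x₁ - x₀) - ((bm₁ + bp₁) / a₁) • g₁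
          - (a₀ / a₁) • (((bm₁ + bp₁) / a₁) • g₁ - (s₀ / a₀) • g₀) - (x₂ - x₁)) := by
    match_scalars <;> field_simp <;> ring
  rw [residual, smul_eq_zero, sub_eq_zero, or_iff_right h₁, eq_comm]

end

theorem forced_discrete_EL_iff_nag (n : ℕ)
    (f : EuclideanSpace ℝ (Fin n) → ℝ) (hf : Differentiable ℝ f)
    (a bm bp : ℕ → ℝ) (ha : ∀ k, a k ≠ 0)
    (Ld : ℕ → EuclideanSpace ℝ (Fin n) → EuclideanSpace ℝ (Fin n) → ℝ)
    (hLd : ∀ k z₀ z₁, Ld k z₀ z₁ =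
      a k * ((1/2 : ℝ) * ‖z₁ - z₀‖^2) - bm k * f z₀ - bp (k+1) * f z₁)
    (x : ℕ → EuclideanSpace ℝ (Fin n)) :
    (∀ k, gradient (fun z => Ld (k+1) z (x (k+2))) (x (k+1))
        + gradient (fun z => Ld k (x k) z) (x (k+1))
        + (-((a k / a (k+1)) * (bm (k+1) + bp (k+1)))) • gradient f (x (k+1))
        + (bm k + bp k) • gradient f (x k) = 0) ↔
    (∀ k, x (k+2) - x (k+1) =
      (a k / a (k+1)) • (x (k+1) - x k)
        - ((bm (k+1) + bp (k+1)) / a (k+1)) • gradient f (x (k+1))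
        - (a k / a (k+1)) •
            (((bm (k+1) + bp (k+1)) / a (k+1)) • gradient f (x (k+1))
              - ((bm k + bp k) / a k) • gradient f (x k))) := by
  obtain rfl : Ld = fun k => discreteLagrangian (a k) (bm k) (bp (k+1)) f :=
    funext fun k => funext fun z₀ => funext fun z₁ => hLd k z₀ z₁
  refine forall_congr' fun k => ?_
  rw [gradient_discreteLagrangian_fst _ _ _ _ (hf _),
    gradient_discreteLagrangian_snd _ _ _ _ (hf _)]
  exact forced_EL_eq_zero_iff (ha k) (ha (k+1)) _ _ _ _ _ _ _ _
end

section
/- For the exponentially dilated Lagrangian with a(t) = b(t) = e^{λt} and step h > 0, the trapezoidal discrete coefficients give constant momentum μ = (1 + e^{−λh})/(1 + e^{λh}) and constant learning rate η = 2h²/(1 + e^{λh}), independent of k. -/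
theorem constant_coefficients (lam h : ℝ) (hh : 0 < h)
    (a bm bp : ℕ → ℝ)
    (ha : ∀ k, a k = (Real.exp (lam * k * h) + Real.exp (lam * (k + 1) * h)) / (2 * h^2))
    (hbm : ∀ k, bm k = Real.exp (lam * k * h) / 2)
    (hbp : ∀ k, bp k = Real.exp (lam * k * h) / 2) :
    ∀ k : ℕ,
      a k / a (k + 1) = (1 + Real.exp (-lam * h)) / (1 + Real.exp (lam * h)) ∧
      (bm k + bp k) / a k = 2 * h^2 / (1 + Real.exp (lam * h)) := by
  intro k
  have e1 : Real.exp (lam * (k + 1) * h) = Real.exp (lam * k * h) * Real.exp (lam * h) := by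
    rw [← Real.exp_add]; ring_nf
  have e2 : Real.exp (lam * ((k + 1 : ℕ) + 1) * h)
      = Real.exp (lam * k * h) * Real.exp (lam * h) * Real.exp (lam * h) := by
    rw [← Real.exp_add, ← Real.exp_add]; push_cast; ring_nf
  have e3 : Real.exp (-lam * h) = (Real.exp (lam * h))⁻¹ := by
    rw [← Real.exp_neg]; ring_nf
  have hx : Real.exp (lam * h) ≠ 0 := Real.exp_ne_zero _
  have hy : Real.exp (lam * k * h) ≠ 0 := Real.exp_ne_zero _
  have hpos : (0:ℝ) < 1 + Real.exp (lam * h) := by positivity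
  have hh2 : h ^ 2 ≠ 0 := by positivity
  constructor
  · rw [ha, ha, e3, e2]
    push_cast
    rw [e1]
    field_simp
    ring
  · rw [hbm, hbp, ha, e1]
    field_simp
    ring
end
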